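/- arXiv:math/0404165 — 2 statements merged into one kernel-verified Lean document; each statement's English description precedes it below -/
import Mathlib

section
/- Let V be a finite-dimensional real inner product space, let ξ ∈ V be a unit vector, and let h be a symmetric bilinear form on V. Define σ_ξ(h)(x,y) := -(1/2)h(x,y) + (1/2)(⟪x,ξ⟫ h(ξ,y) + ⟪y,ξ⟫ h(x,ξ)) - (1/2)⟪x,ξ⟫⟪y,ξ⟫ h(ξ,ξ). Then the pairing of σ_ξ(h) with h in any orthonormal basis (e_1,…,e_n) satisfies Σ_{i,j} σ_ξ(h)(e_i,e_j) h(e_i,e_j) = -(1/2) Σ_{i,j} h(P e_i, P e_j)², where P is the orthogonal projection onto ξ^⊥. In particular this pairing is ≤ 0, and it equals 0 if and only if h(Px,Py) = 0 for all x,y ∈ V. (Hence the Jacobi operator L of Perelman's λ-functional is degenerate negative elliptic.) -/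
open RealInnerProductSpace

/-- **The Jacobi operator `L` of Perelman's `λ`-functional is degenerate negative elliptic.**
Let `V` be a finite-dimensional real inner product space with orthonormal basis
`(e_1, …, e_n)`, `ξ ∈ V` a unit vector, and `h` a symmetric bilinear form on `V`.  With
`σ_ξ(h)(x,y) := -(1/2) h(x,y) + (1/2)(⟪x,ξ⟫ h(ξ,y) + ⟪y,ξ⟫ h(x,ξ)) - (1/2)⟪x,ξ⟫⟪y,ξ⟫ h(ξ,ξ)`
and `P` the orthogonal projection onto `ξ^⊥`, the pairing of `σ_ξ(h)` with `h` satisfies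
`∑_{i,j} σ_ξ(h)(e_i,e_j) h(e_i,e_j) = -(1/2) ∑_{i,j} h(P e_i, P e_j)²`; in particular it is
`≤ 0`, with equality iff `h(Px, Py) = 0` for all `x, y`. -/
theorem symbol_pairing_nonpositive
    {V : Type*} [NormedAddCommGroup V] [InnerProductSpace ℝ V] [FiniteDimensional ℝ V]
    {n : ℕ} (e : OrthonormalBasis (Fin n) ℝ V)
    (ξ : V) (hξ : ⟪ξ, ξ⟫ = 1)
    (h : V →ₗ[ℝ] V →ₗ[ℝ] ℝ) (hsymm : ∀ x y : V, h x y = h y x)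
    (P : V → V) (hP : ∀ x : V, P x = x - ⟪x, ξ⟫ • ξ)
    (σ : V → V → ℝ)
    (hσ : ∀ x y : V,
      σ x y = -(1/2) * h x y + (1/2) * (⟪x, ξ⟫ * h ξ y + ⟪y, ξ⟫ * h x ξ)
          - (1/2) * ⟪x, ξ⟫ * ⟪y, ξ⟫ * h ξ ξ) :
    (∑ i : Fin n, ∑ j : Fin n, σ (e i) (e j) * h (e i) (e j)
        = -(1/2) * ∑ i : Fin n, ∑ j : Fin n, (h (P (e i)) (P (e j))) ^ 2)
      ∧ (∑ i : Fin n, ∑ j : Fin n, σ (e i) (e j) * h (e i) (e j) ≤ 0)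
      ∧ ((∑ i : Fin n, ∑ j : Fin n, σ (e i) (e j) * h (e i) (e j) = 0)
          ↔ ∀ x y : V, h (P x) (P y) = 0) := by
  -- expansion of h (P x) (P y)
  have hPe : ∀ x y : V, h (P x) (P y)
      = h x y - ⟪y, ξ⟫ * h x ξ - ⟪x, ξ⟫ * h ξ y + ⟪x, ξ⟫ * ⟪y, ξ⟫ * h ξ ξ := by
    intro x y
    rw [hP, hP]
    simp only [map_sub, map_smul, LinearMap.sub_apply, LinearMap.smul_apply, smul_eq_mul]
    ring
  -- σ is -(1/2) h(Px, Py)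
  have hσm : ∀ x y : V, σ x y = -(1/2) * h (P x) (P y) := by
    intro x y
    rw [hσ, hPe]
    ring
  -- coefficients sum facts
  have hcoe : ∀ x : V, ∑ i : Fin n, ⟪e i, x⟫ * ⟪e i, ξ⟫ = ⟪x, ξ⟫ := by
    intro x
    calc ∑ i : Fin n, ⟪e i, x⟫ * ⟪e i, ξ⟫
        = ⟪∑ i : Fin n, ⟪e i, x⟫ • e i, ξ⟫ := by
          rw [sum_inner]
          exact Finset.sum_congr rfl fun i _ => (real_inner_smul_left _ _ _).symm
      _ = ⟪x, ξ⟫ := by rw [e.sum_repr' x]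
  -- P of any vector expands through the basis
  have hPx : ∀ x : V, P x = ∑ i : Fin n, ⟪e i, x⟫ • P (e i) := by
    intro x
    have : ∑ i : Fin n, ⟪e i, x⟫ • P (e i)
        = ∑ i : Fin n, (⟪e i, x⟫ • e i - (⟪e i, x⟫ * ⟪e i, ξ⟫) • ξ) := by
      refine Finset.sum_congr rfl fun i _ => ?_
      rw [hP, smul_sub, smul_smul]
    rw [this, Finset.sum_sub_distrib, ← Finset.sum_smul, e.sum_repr' x, hcoe x, hP]
  -- ∑_j ⟪e j, ξ⟫ • P (e j) = P ξ = 0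
  have hPξ : ∑ j : Fin n, ⟪e j, ξ⟫ • P (e j) = 0 := by
    rw [← hPx ξ, hP, hξ, one_smul, sub_self]
  have hsum1 : ∀ i : Fin n, ∑ j : Fin n, ⟪e j, ξ⟫ * h (P (e i)) (P (e j)) = 0 := by
    intro i
    calc ∑ j : Fin n, ⟪e j, ξ⟫ * h (P (e i)) (P (e j))
        = h (P (e i)) (∑ j : Fin n, ⟪e j, ξ⟫ • P (e j)) := by
          rw [map_sum]
          exact Finset.sum_congr rfl fun j _ => (by rw [map_smul, smul_eq_mul])
      _ = 0 := by rw [hPξ, map_zero]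
  have hsum2 : ∀ j : Fin n, ∑ i : Fin n, ⟪e i, ξ⟫ * h (P (e i)) (P (e j)) = 0 := by
    intro j
    calc ∑ i : Fin n, ⟪e i, ξ⟫ * h (P (e i)) (P (e j))
        = ∑ i : Fin n, ⟪e i, ξ⟫ * h (P (e j)) (P (e i)) := by
          exact Finset.sum_congr rfl fun i _ => by rw [hsymm]
      _ = 0 := hsum1 j
  -- main identity: ∑∑ m * a = ∑∑ m²
  have expand : ∀ i : Fin n, ∑ j : Fin n, h (P (e i)) (P (e j)) * h (e i) (e j)
      = ∑ j : Fin n, (h (P (e i)) (P (e j))) ^ 2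
        + h (e i) ξ * ∑ j : Fin n, ⟪e j, ξ⟫ * h (P (e i)) (P (e j))
        + ∑ j : Fin n, h ξ (e j) * (⟪e i, ξ⟫ * h (P (e i)) (P (e j)))
        - h ξ ξ * ⟪e i, ξ⟫ * ∑ j : Fin n, ⟪e j, ξ⟫ * h (P (e i)) (P (e j)) := by
    intro i
    rw [Finset.mul_sum, Finset.mul_sum, ← Finset.sum_add_distrib, ← Finset.sum_add_distrib,
      ← Finset.sum_sub_distrib]
    refine Finset.sum_congr rfl fun j _ => ?_
    have key : h (e i) (e j) = h (P (e i)) (P (e j))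
        + (⟪e j, ξ⟫ * h (e i) ξ + ⟪e i, ξ⟫ * h ξ (e j) - ⟪e i, ξ⟫ * ⟪e j, ξ⟫ * h ξ ξ) := by
      rw [hPe]; ring
    rw [key]; ring
  have cross : ∑ i : Fin n, ∑ j : Fin n, h ξ (e j) * (⟪e i, ξ⟫ * h (P (e i)) (P (e j))) = 0 := by
    rw [Finset.sum_comm]
    refine Finset.sum_eq_zero fun j _ => ?_
    rw [← Finset.mul_sum, hsum2 j, mul_zero]
  have main : ∑ i : Fin n, ∑ j : Fin n, h (P (e i)) (P (e j)) * h (e i) (e j)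
      = ∑ i : Fin n, ∑ j : Fin n, (h (P (e i)) (P (e j))) ^ 2 := by
    calc ∑ i : Fin n, ∑ j : Fin n, h (P (e i)) (P (e j)) * h (e i) (e j)
        = ∑ i : Fin n, (∑ j : Fin n, (h (P (e i)) (P (e j))) ^ 2
            + ∑ j : Fin n, h ξ (e j) * (⟪e i, ξ⟫ * h (P (e i)) (P (e j)))) := by
          refine Finset.sum_congr rfl fun i _ => ?_
          rw [expand i, hsum1 i]
          ring
      _ = ∑ i : Fin n, ∑ j : Fin n, (h (P (e i)) (P (e j))) ^ 2
          + ∑ i : Fin n, ∑ j : Fin n, h ξ (e j) * (⟪e i, ξ⟫ * h (P (e i)) (P (e j))) :=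
          Finset.sum_add_distrib
      _ = _ := by rw [cross, add_zero]
  -- first conjunct
  have eq1 : ∑ i : Fin n, ∑ j : Fin n, σ (e i) (e j) * h (e i) (e j)
      = -(1/2) * ∑ i : Fin n, ∑ j : Fin n, (h (P (e i)) (P (e j))) ^ 2 := by
    rw [← main, Finset.mul_sum]
    refine Finset.sum_congr rfl fun i _ => ?_
    rw [Finset.mul_sum]
    refine Finset.sum_congr rfl fun j _ => ?_
    rw [hσm]; ring
  have Snn : (0:ℝ) ≤ ∑ i : Fin n, ∑ j : Fin n, (h (P (e i)) (P (e j))) ^ 2 := by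
    positivity
  refine ⟨eq1, ?_, ?_⟩
  · rw [eq1]; nlinarith [Snn]
  · rw [eq1]
    constructor
    · intro h0 x y
      have hS : ∑ i : Fin n, ∑ j : Fin n, (h (P (e i)) (P (e j))) ^ 2 = 0 := by linarith
      have hm : ∀ i j : Fin n, h (P (e i)) (P (e j)) = 0 := by
        intro i j
        have hrow := (Finset.sum_eq_zero_iff_of_nonneg
          (fun i _ => Finset.sum_nonneg fun j _ => sq_nonneg _)).mp hS i (Finset.mem_univ i)
        have := (Finset.sum_eq_zero_iff_of_nonneg
          (fun j _ => sq_nonneg _)).mp hrow j (Finset.mem_univ j)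
        exact pow_eq_zero_iff (by norm_num) |>.mp this
      rw [hPx x, hPx y]
      simp only [map_sum, map_smul, LinearMap.sum_apply, LinearMap.smul_apply, smul_eq_mul]
      simp [hm]
    · intro hall
      have : ∀ i j : Fin n, h (P (e i)) (P (e j)) = 0 := fun i j => hall (e i) (e j)
      rw [Finset.sum_eq_zero fun i _ => Finset.sum_eq_zero fun j _ => by rw [this i j]; norm_num]
      ring
end

section
/- The exact central-density values of the 4-dimensional shrinkers in the table are strictly ordered as follows: 0 < 1/(2e²) < 1/e² < 3/(2e²) < 2/e² < 1/3 < 5/(2e²) < 1/e < √(π/e³) < 3/e² < 1/2 < 4/e² < 9/(2e²) < e^{√2-2}(1+√2)/2 < 2/e < 2√(π/e³) < 6/e² < 1. (These are, in increasing order, Θ of: ℂP²#8(-ℂP²), ℂP²#7(-ℂP²), ℂP²#6(-ℂP²), ℂP²#5(-ℂP²), C(S³/ℤ₃), ℂP²#4(-ℂP²), ℝP²×ℝ², ℝP³×ℝ, ℝP⁴ and ℂP²#3(-ℂP²), C(ℝP³) and C(ℝP²)×ℝ, S²×S², ℂP², the blowdown shrinker L(2,-1), S²×ℝ², S³×ℝ,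 S⁴, and ℝ⁴. Since the shrinker entropy ν = log Θ is monotone under the Ricci flow, one shrinker can decay to another only if its density is strictly smaller, so this chain determines the possible decays among these models.) -/
open Real

private lemma s2_sq : Real.sqrt 2 ^ 2 = 2 := Real.sq_sqrt (by norm_num)
private lemma s2_lb : (1.414213562 : ℝ) < Real.sqrt 2 := by
  nlinarith [s2_sq, Real.sqrt_nonneg 2]
private lemma s2_ub : Real.sqrt 2 < 1.414213563 := by
  nlinarith [s2_sq, Real.sqrt_nonneg 2]

private lemma exp_sqrt2_lb : (1 + Real.sqrt 2 / 16 : ℝ) ^ 16 ≤ exp (Real.sqrt 2) := by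
  have h16 : exp (Real.sqrt 2) = exp (Real.sqrt 2 / 16) ^ 16 := by
    rw [← Real.exp_nat_mul]; congr 1; push_cast; ring
  rw [h16]
  have hb : (1 + Real.sqrt 2 / 16 : ℝ) ≤ exp (Real.sqrt 2 / 16) := by
    have := Real.add_one_le_exp (Real.sqrt 2 / 16); linarith
  exact pow_le_pow_left₀ (by nlinarith [Real.sqrt_nonneg 2]) hb 16

private lemma exp_step_ub : exp (Real.sqrt 2 / 32) ≤ 1 / (1 - Real.sqrt 2 / 32) := by
  have h1 : 1 - Real.sqrt 2 / 32 ≤ exp (-(Real.sqrt 2 / 32)) := by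
    have := Real.add_one_le_exp (-(Real.sqrt 2 / 32)); linarith
  have h2 : (0:ℝ) < 1 - Real.sqrt 2 / 32 := by nlinarith [s2_ub]
  rw [le_div_iff₀ h2]
  calc exp (Real.sqrt 2 / 32) * (1 - Real.sqrt 2 / 32)
      ≤ exp (Real.sqrt 2 / 32) * exp (-(Real.sqrt 2 / 32)) :=
        mul_le_mul_of_nonneg_left h1 (Real.exp_pos _).le
    _ = 1 := by rw [← Real.exp_add]; simp

private lemma exp_sqrt2_ub : exp (Real.sqrt 2) ≤ (1 / (1 - Real.sqrt 2 / 32)) ^ 32 := by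
  have h32 : exp (Real.sqrt 2) = exp (Real.sqrt 2 / 32) ^ 32 := by
    rw [← Real.exp_nat_mul]; congr 1; push_cast; ring
  rw [h32]
  exact pow_le_pow_left₀ (Real.exp_pos _).le exp_step_ub 32

private lemma exp_sqrt2_lt : exp (Real.sqrt 2) < 4.2479 := by
  have hden : ((0.95580581 : ℝ)) < 1 - Real.sqrt 2 / 32 := by nlinarith [s2_ub]
  have h3 : ((0.95580581 : ℝ)) ^ 32 < (1 - Real.sqrt 2 / 32) ^ 32 :=
    pow_lt_pow_left₀ hden (by norm_num) (by norm_num)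
  have h2 : (1 / (1 - Real.sqrt 2 / 32) : ℝ) ^ 32 = 1 / (1 - Real.sqrt 2 / 32) ^ 32 := by
    rw [div_pow]; norm_num
  have h4 : (1 / (1 - Real.sqrt 2 / 32) ^ 32 : ℝ) < 1 / (0.95580581:ℝ) ^ 32 :=
    one_div_lt_one_div_of_lt (by positivity) h3
  have h5 : (1 / (0.95580581:ℝ) ^ 32 : ℝ) < 4.2479 := by norm_num
  calc exp (Real.sqrt 2) ≤ (1 / (1 - Real.sqrt 2 / 32)) ^ 32 := exp_sqrt2_ub
    _ = 1 / (1 - Real.sqrt 2 / 32) ^ 32 := h2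
    _ < 1 / (0.95580581:ℝ) ^ 32 := h4
    _ < 4.2479 := h5

private lemma exp_sqrt2_gt : (3.877 : ℝ) < exp (Real.sqrt 2) := by
  have hlb : (1 + (1.414213562 : ℝ) / 16) ^ 16 ≤ exp (Real.sqrt 2) := by
    refine le_trans ?_ exp_sqrt2_lb
    exact pow_le_pow_left₀ (by norm_num) (by nlinarith [s2_lb]) 16
  have : (3.877 : ℝ) < (1 + (1.414213562 : ℝ) / 16) ^ 16 := by norm_num
  linarith

/-- **Strict ordering of the central densities of the 4-dimensional shrinkers in the
table.**  With `e = exp 1`, we have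
`0 < 1/(2e²) < 1/e² < 3/(2e²) < 2/e² < 1/3 < 5/(2e²) < 1/e < √(π/e³) < 3/e² < 1/2`
`< 4/e² < 9/(2e²) < e^{√2-2}(1+√2)/2 < 2/e < 2√(π/e³) < 6/e² < 1`.
These are, in increasing order, `Θ` of: `ℂP²#8(-ℂP²)`, `ℂP²#7(-ℂP²)`, `ℂP²#6(-ℂP²)`,
`ℂP²#5(-ℂP²)`, `C(S³/ℤ₃)`, `ℂP²#4(-ℂP²)`, `ℝP²×ℝ²`, `ℝP³×ℝ`, `ℝP⁴` and `ℂP²#3(-ℂP²)`,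
`C(ℝP³)` and `C(ℝP²)×ℝ`, `S²×S²`, `ℂP²`, the blowdown shrinker `L(2,-1)`, `S²×ℝ²`,
`S³×ℝ`, `S⁴`, and `ℝ⁴`.  Since `ν = log Θ` is monotone under the Ricci flow, one shrinker
can decay to another only if its density is strictly smaller. -/
theorem central_density_table_ordering :
    (0 : ℝ) < 1 / (2 * exp 1 ^ 2)
    ∧ 1 / (2 * exp 1 ^ 2) < 1 / exp 1 ^ 2
    ∧ 1 / exp 1 ^ 2 < 3 / (2 * exp 1 ^ 2)
    ∧ 3 / (2 * exp 1 ^ 2) < 2 / exp 1 ^ 2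
    ∧ 2 / exp 1 ^ 2 < 1 / 3
    ∧ (1 : ℝ) / 3 < 5 / (2 * exp 1 ^ 2)
    ∧ 5 / (2 * exp 1 ^ 2) < 1 / exp 1
    ∧ 1 / exp 1 < Real.sqrt (π / exp 1 ^ 3)
    ∧ Real.sqrt (π / exp 1 ^ 3) < 3 / exp 1 ^ 2
    ∧ 3 / exp 1 ^ 2 < 1 / 2
    ∧ (1 : ℝ) / 2 < 4 / exp 1 ^ 2
    ∧ 4 / exp 1 ^ 2 < 9 / (2 * exp 1 ^ 2)
    ∧ 9 / (2 * exp 1 ^ 2) < exp (Real.sqrt 2 - 2) * (1 + Real.sqrt 2) / 2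
    ∧ exp (Real.sqrt 2 - 2) * (1 + Real.sqrt 2) / 2 < 2 / exp 1
    ∧ 2 / exp 1 < 2 * Real.sqrt (π / exp 1 ^ 3)
    ∧ 2 * Real.sqrt (π / exp 1 ^ 3) < 6 / exp 1 ^ 2
    ∧ 6 / exp 1 ^ 2 < 1 := by
  have he1 : (2.7182818283 : ℝ) < exp 1 := Real.exp_one_gt_d9
  have he2 : exp 1 < 2.7182818286 := Real.exp_one_lt_d9
  have he0 : (0:ℝ) < exp 1 := Real.exp_pos 1
  have he0' : (0:ℝ) < exp 1 ^ 2 := by positivity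
  have hpi1 : (3.141592 : ℝ) < π := Real.pi_gt_d6
  have hpi2 : π < 3.141593 := Real.pi_lt_d6
  have hcube : (0:ℝ) < exp 1 ^ 3 := by positivity
  have hsq1 : 1 / exp 1 < Real.sqrt (π / exp 1 ^ 3) := by
    rw [Real.lt_sqrt (by positivity)]
    rw [div_pow, div_lt_div_iff₀ (by positivity) hcube]
    nlinarith
  have hsq2 : Real.sqrt (π / exp 1 ^ 3) < 3 / exp 1 ^ 2 := by
    rw [Real.sqrt_lt' (by positivity)]
    rw [div_pow, div_lt_div_iff₀ hcube (by positivity)]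
    nlinarith
  have hE : exp (Real.sqrt 2 - 2) * exp 1 ^ 2 = exp (Real.sqrt 2) := by
    rw [← Real.exp_nat_mul, ← Real.exp_add]
    congr 1; push_cast; ring
  have hEpos : (0:ℝ) < exp (Real.sqrt 2 - 2) := Real.exp_pos _
  have hs1 := s2_lb
  have hs2 := s2_ub
  have hub := exp_sqrt2_lt
  have hlb := exp_sqrt2_gt
  refine ⟨by positivity, ?_, ?_, ?_, ?_, ?_, ?_, hsq1, hsq2, ?_, ?_, ?_, ?_, ?_, ?_, ?_, ?_⟩
  · rw [div_lt_div_iff₀ (by positivity) he0']; nlinarith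
  · rw [div_lt_div_iff₀ he0' (by positivity)]; nlinarith
  · rw [div_lt_div_iff₀ (by positivity) he0']; nlinarith
  · rw [div_lt_div_iff₀ he0' (by norm_num)]; nlinarith
  · rw [div_lt_div_iff₀ (by norm_num) (by positivity)]; nlinarith
  · rw [div_lt_div_iff₀ (by positivity) he0]; nlinarith
  · rw [div_lt_div_iff₀ he0' (by norm_num)]; nlinarith
  · rw [div_lt_div_iff₀ (by norm_num) he0']; nlinarith
  · rw [div_lt_div_iff₀ he0' (by positivity)]; nlinarith
  · -- 9/(2e²) < exp(√2-2)(1+√2)/2  ⟺  18 < exp(√2-2)(1+√2)·2e² = 2·exp(√2)(1+√2)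
    rw [div_lt_div_iff₀ (by positivity) (by norm_num : (0:ℝ) < 2)]
    have heq : exp (Real.sqrt 2 - 2) * (1 + Real.sqrt 2) * (2 * exp 1 ^ 2)
        = 2 * (exp (Real.sqrt 2) * (1 + Real.sqrt 2)) := by rw [← hE]; ring
    have h9 : (9:ℝ) < exp (Real.sqrt 2) * (1 + Real.sqrt 2) := by nlinarith
    rw [heq]; linarith
  · -- exp(√2-2)(1+√2)/2 < 2/e  ⟺  exp(√2-2)(1+√2)·e < 4
    rw [div_lt_div_iff₀ (by norm_num : (0:ℝ) < 2) he0]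
    have heq : exp (Real.sqrt 2 - 2) * (1 + Real.sqrt 2) * exp 1 * exp 1
        = exp (Real.sqrt 2) * (1 + Real.sqrt 2) := by rw [← hE]; ring
    have key : exp (Real.sqrt 2) * (1 + Real.sqrt 2) < 10.26 := by nlinarith
    by_contra hcon
    push_neg at hcon
    have h4e : (2*2) * exp 1 ≤ exp (Real.sqrt 2 - 2) * (1 + Real.sqrt 2) * exp 1 * exp 1 :=
      mul_le_mul_of_nonneg_right hcon he0.le
    rw [heq] at h4e
    linarith
  · rw [show (2:ℝ) / exp 1 = 2 * (1 / exp 1) by ring]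
    exact (mul_lt_mul_iff_right₀ (by norm_num)).mpr hsq1
  · calc 2 * Real.sqrt (π / exp 1 ^ 3) < 2 * (3 / exp 1 ^ 2) :=
        (mul_lt_mul_iff_right₀ (by norm_num)).mpr hsq2
      _ = 6 / exp 1 ^ 2 := by ring
  · rw [div_lt_one he0']; nlinarith
end
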